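/- arXiv:2310.20230 — 2 statements merged into one kernel-verified Lean document; each statement's English description precedes it below -/
import Mathlib

section
/- Let G be a chain graph with binary string 0^{a_1}1^{a_2}…0^{a_{2h-1}}1^{a_{2h}}. Then all n eigenvalues of the adjacency matrix A(G) are pairwise distinct if and only if either (i) a_1 = a_2 = ⋯ = a_{2h} = 1, or (ii) there is exactly one index i with a_i = 2 and a_j = 1 for all j ≠ i. -/
open Matrix Polynomial

/-- Adjacency between cells of a chain graph: cell `k` (0-indexed) is a "zero"/white cell
when `k` is even and a "one"/black cell when `k` is odd; white cell `2i` is joined to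
black cell `2j+1` iff `2i < 2j+1`. -/
def cellAdj {m : ℕ} (k l : Fin m) : Prop :=
  (Even (k : ℕ) ∧ Odd (l : ℕ) ∧ (k : ℕ) < l) ∨
  (Even (l : ℕ) ∧ Odd (k : ℕ) ∧ (l : ℕ) < k)

instance {m : ℕ} (k l : Fin m) : Decidable (cellAdj k l) := by
  unfold cellAdj; infer_instance

/-- The chain graph with binary string `0^{a 0} 1^{a 1} ⋯ 0^{a (2h-2)} 1^{a (2h-1)}`. -/
def chainGraph (h : ℕ) (a : Fin (2 * h) → ℕ) :
    SimpleGraph (Σ k : Fin (2 * h), Fin (a k)) where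
  Adj u v := cellAdj u.1 v.1
  symm := by
    constructor
    intro u v huv
    unfold cellAdj at *
    exact huv.symm
  loopless := by
    constructor
    intro u hu
    rcases hu with ⟨_, _, hlt⟩ | ⟨_, _, hlt⟩ <;> exact lt_irrefl _ hlt

instance (h : ℕ) (a : Fin (2 * h) → ℕ) : DecidableRel (chainGraph h a).Adj :=
  fun u v => inferInstanceAs (Decidable (cellAdj u.1 v.1))

/-- Adjacency matrix (over ℝ) of the chain graph. -/
noncomputable def chainA (h : ℕ) (a : Fin (2 * h) → ℕ) :
    Matrix (Σ k : Fin (2 * h), Fin (a k)) (Σ k : Fin (2 * h), Fin (a k)) ℝ :=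
  (chainGraph h a).adjMatrix ℝ

/-- Seidel matrix `J - I - 2A` of a graph. -/
noncomputable def seidel {V : Type*} [Fintype V] [DecidableEq V]
    (G : SimpleGraph V) [DecidableRel G.Adj] : Matrix V V ℝ :=
  (Matrix.of fun _ _ => (1 : ℝ)) - 1 - (2 : ℝ) • G.adjMatrix ℝ

/-- Seidel matrix of the chain graph. -/
noncomputable def chainS (h : ℕ) (a : Fin (2 * h) → ℕ) :
    Matrix (Σ k : Fin (2 * h), Fin (a k)) (Σ k : Fin (2 * h), Fin (a k)) ℝ :=
  seidel (chainGraph h a)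

/-- Quotient adjacency matrix `Ã(G)` of the chain graph. -/
noncomputable def quotA (h : ℕ) (a : Fin (2 * h) → ℕ) :
    Matrix (Fin (2 * h)) (Fin (2 * h)) ℝ :=
  Matrix.of fun k l => if cellAdj k l then (a l : ℝ) else 0

/-- Quotient Seidel matrix `S̃(G)` of the chain graph. -/
noncomputable def quotS (h : ℕ) (a : Fin (2 * h) → ℕ) :
    Matrix (Fin (2 * h)) (Fin (2 * h)) ℝ :=
  Matrix.of fun k l =>
    if k = l then (a k : ℝ) - 1 else if cellAdj k l then -(a l : ℝ) else (a l : ℝ)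
section General
variable {n : Type*} [Fintype n] [DecidableEq n]

lemma my_charpoly_conj_eq {R : Type*} [CommRing R] (P A B : Matrix n n R)
    (hPB : P * B = 1) : (P * A * B).charpoly = A.charpoly := by
  have h1 : P.map C * B.map C = 1 := by
    rw [← Matrix.map_mul, hPB, Matrix.map_one _ (map_zero C) (map_one C)]
  have key : charmatrix (P * A * B) = P.map C * charmatrix A * B.map C := by
    show Matrix.scalar n (X : R[X]) - (P * A * B).map C = _
    have h2 : charmatrix A = Matrix.scalar n (X : R[X]) - A.map C := rfl
    rw [h2, mul_sub, sub_mul, Matrix.map_mul, Matrix.map_mul]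
    congr 1
    symm
    calc P.map C * Matrix.scalar n (X : R[X]) * B.map C
        = P.map C * (Matrix.scalar n (X : R[X]) * B.map C) := by rw [mul_assoc]
      _ = P.map C * (B.map C * Matrix.scalar n (X : R[X])) := by
            rw [(Matrix.scalar_commute (X : R[X]) (Commute.all X) (B.map C)).eq]
      _ = (P.map C * B.map C) * Matrix.scalar n (X : R[X]) := by rw [mul_assoc]
      _ = Matrix.scalar n (X : R[X]) := by rw [h1, one_mul]
  have h3 : (P * A * B).charpoly = (charmatrix (P * A * B)).det := rfl
  have h4 : A.charpoly = (charmatrix A).det := rfl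
  rw [h3, h4, key, det_mul, det_mul, mul_right_comm, ← det_mul, h1, det_one, one_mul]

lemma my_charpoly_diagonal {R : Type*} [CommRing R] (d : n → R) :
    (diagonal d).charpoly = ∏ i, (X - C (d i)) := by
  have key : charmatrix (diagonal d) = diagonal fun i => X - C (d i) := by
    ext i j
    by_cases hij : i = j
    · subst hij; rw [charmatrix_apply_eq, diagonal_apply_eq, diagonal_apply_eq]
    · rw [charmatrix_apply_ne _ _ _ hij, diagonal_apply_ne _ hij, diagonal_apply_ne _ hij,
        map_zero, neg_zero]
  have h3 : (diagonal d).charpoly = (charmatrix (diagonal d)).det := rfl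
  rw [h3, key, det_diagonal]

lemma my_roots_charpoly {A : Matrix n n ℝ} (hA : A.IsHermitian) :
    A.charpoly.roots = Finset.univ.val.map hA.eigenvalues := by
  have hst := hA.spectral_theorem
  rw [RCLike.ofReal_real_eq_id, Function.id_comp] at hst
  have h1 : A.charpoly = (diagonal hA.eigenvalues).charpoly := by
    conv_lhs => rw [hst]
    exact my_charpoly_conj_eq _ _ _ ((Matrix.mem_unitaryGroup_iff).mp (hA.eigenvectorUnitary).2)
  rw [h1, my_charpoly_diagonal]
  have h2 : ∏ i, (X - C (hA.eigenvalues i))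
      = (Multiset.map (fun r => X - C r) (Finset.univ.val.map hA.eigenvalues)).prod := by
    rw [Multiset.map_map]; rfl
  rw [h2, roots_multiset_prod_X_sub_C]

end General

section Trick
variable {n : Type*} [Fintype n] [DecidableEq n]

lemma my_eig_eq {A : Matrix n n ℝ} (hA : A.IsHermitian) (μ : ℝ)
    (φ : (n → ℝ) →ₗ[ℝ] ℝ)
    (huniq : ∀ x : n → ℝ, A *ᵥ x = μ • x → φ x = 0 → x = 0)
    {i j : n} (hi : hA.eigenvalues i = μ) (hj : hA.eigenvalues j = μ) : i = j := by
  by_contra hij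
  set v : n → ℝ := (WithLp.equiv 2 (n → ℝ)) (hA.eigenvectorBasis i) with hv_def
  set w : n → ℝ := (WithLp.equiv 2 (n → ℝ)) (hA.eigenvectorBasis j) with hw_def
  have hv : A *ᵥ v = μ • v := by
    have := hA.mulVec_eigenvectorBasis i; rw [hi] at this; exact this
  have hw : A *ᵥ w = μ • w := by
    have := hA.mulVec_eigenvectorBasis j; rw [hj] at this; exact this
  set z : n → ℝ := φ w • v - φ v • w with hz_def
  have hz : A *ᵥ z = μ • z := by
    rw [hz_def, mulVec_sub, mulVec_smul, mulVec_smul, hv, hw, smul_sub,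
      smul_comm μ (φ w), smul_comm μ (φ v)]
  have hφz : φ z = 0 := by
    rw [hz_def, map_sub, _root_.map_smul, _root_.map_smul, smul_eq_mul, smul_eq_mul, mul_comm, sub_self]
  have hz0 : z = 0 := huniq z hz hφz
  have hZ : φ w • hA.eigenvectorBasis i - φ v • hA.eigenvectorBasis j = 0 := by
    ext u
    have := congrFun hz0 u
    simpa [hz_def, hv_def, hw_def] using this
  have hortho := hA.eigenvectorBasis.orthonormal
  rw [orthonormal_iff_ite] at hortho
  have hw0 : φ w = 0 := by
    have h1 := congrArg (fun t => (inner ℝ (hA.eigenvectorBasis i) t : ℝ)) hZ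
    simpa [inner_sub_right, inner_smul_right, hortho, hij] using h1
  have hv0 : φ v = 0 := by
    have h1 := congrArg (fun t => (inner ℝ (hA.eigenvectorBasis j) t : ℝ)) hZ
    simpa [inner_sub_right, inner_smul_right, hortho, Ne.symm hij] using h1
  have := huniq v hv hv0
  have hne := hA.eigenvectorBasis.orthonormal.ne_zero i
  apply hne
  apply (WithLp.equiv 2 (n → ℝ)).injective
  simpa [hv_def] using this

end Trick

lemma cellAdj_iff {N : ℕ} (k l : Fin N) :
    cellAdj k l ↔ ((k : ℕ) % 2 = 0 ∧ (l : ℕ) % 2 = 1 ∧ (k : ℕ) < l) ∨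
      ((l : ℕ) % 2 = 0 ∧ (k : ℕ) % 2 = 1 ∧ (l : ℕ) < k) := by
  unfold cellAdj
  rw [Nat.even_iff, Nat.even_iff, Nat.odd_iff, Nat.odd_iff]

lemma sum_cellAdj_single {N : ℕ} (k₁ l₀ : Fin N) (g : Fin N → ℝ)
    (hcond : ∀ l : Fin N, cellAdj k₁ l ↔ l = l₀) :
    (∑ l, if cellAdj k₁ l then g l else 0) = g l₀ := by
  have key : ∀ l : Fin N, (if cellAdj k₁ l then g l else 0) = (if l = l₀ then g l else 0) := by
    intro l
    by_cases hl : l = l₀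
    · rw [if_pos ((hcond l).mpr hl), if_pos hl]
    · rw [if_neg (fun hc => hl ((hcond l).mp hc)), if_neg hl]
  rw [Finset.sum_congr rfl fun l _ => key l, Finset.sum_ite_eq' Finset.univ l₀ g,
    if_pos (Finset.mem_univ _)]

lemma sum_cellAdj_step {N : ℕ} (k₁ k₂ l₀ : Fin N) (g : Fin N → ℝ)
    (hcond : ∀ l : Fin N, cellAdj k₁ l ↔ (cellAdj k₂ l ∨ l = l₀)) (hn : ¬ cellAdj k₂ l₀) :
    (∑ l, if cellAdj k₁ l then g l else 0) = (∑ l, if cellAdj k₂ l then g l else 0) + g l₀ := by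
  have key : ∀ l : Fin N, (if cellAdj k₁ l then g l else 0)
      = (if cellAdj k₂ l then g l else 0) + (if l = l₀ then g l else 0) := by
    intro l
    by_cases h2 : cellAdj k₂ l
    · have h1 : cellAdj k₁ l := (hcond l).mpr (Or.inl h2)
      have hne : l ≠ l₀ := fun he => hn (he ▸ h2)
      rw [if_pos h1, if_pos h2, if_neg hne, add_zero]
    · by_cases h3 : l = l₀
      · rw [if_pos ((hcond l).mpr (Or.inr h3)), if_neg h2, if_pos h3, zero_add]
      · rw [if_neg (fun h1 => (((hcond l).mp h1).elim h2 h3)), if_neg h2, if_neg h3, add_zero]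
  rw [Finset.sum_congr rfl fun l _ => key l, Finset.sum_add_distrib,
    Finset.sum_ite_eq' Finset.univ l₀ g, if_pos (Finset.mem_univ _)]

lemma mulVec_chainA (h : ℕ) (a : Fin (2 * h) → ℕ)
    (x : (Σ k : Fin (2 * h), Fin (a k)) → ℝ) (k : Fin (2 * h)) (i : Fin (a k)) :
    (chainA h a *ᵥ x) ⟨k, i⟩
      = ∑ l, if cellAdj k l then (∑ j, x ⟨l, j⟩) else 0 := by
  show ∑ v : (Σ k : Fin (2 * h), Fin (a k)), (chainA h a) ⟨k, i⟩ v * x v = _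
  rw [← Finset.univ_sigma_univ, Finset.sum_sigma]
  refine Finset.sum_congr rfl fun l _ => ?_
  by_cases hadj : cellAdj k l
  · rw [if_pos hadj]
    refine Finset.sum_congr rfl fun jj _ => ?_
    rw [show (chainA h a) ⟨k, i⟩ ⟨l, jj⟩ = if cellAdj k l then 1 else 0 from rfl,
      if_pos hadj, one_mul]
  · rw [if_neg hadj]
    refine Finset.sum_eq_zero fun jj _ => ?_
    rw [show (chainA h a) ⟨k, i⟩ ⟨l, jj⟩ = if cellAdj k l then 1 else 0 from rfl,
      if_neg hadj, zero_mul]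

lemma eigvec_unique (h : ℕ) (hh : 1 ≤ h) (a : Fin (2 * h) → ℕ) (ha : ∀ k, 1 ≤ a k)
    (μ : ℝ) (hμ : μ ≠ 0) (x : (Σ k : Fin (2 * h), Fin (a k)) → ℝ)
    (hx : chainA h a *ᵥ x = μ • x)
    (h0 : x ⟨⟨0, by omega⟩, ⟨0, ha _⟩⟩ = 0) : x = 0 := by
  set T : Fin (2 * h) → ℝ := fun k => ∑ l, if cellAdj k l then (∑ j, x ⟨l, j⟩) else 0 with hT_def
  have heq : ∀ (k : Fin (2 * h)) (i : Fin (a k)), μ * x ⟨k, i⟩ = T k := by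
    intro k i
    have h1 := congrFun hx ⟨k, i⟩
    rw [mulVec_chainA] at h1
    exact h1.symm
  set y : Fin (2 * h) → ℝ := fun k => T k / μ with hy_def
  have hconst : ∀ (k : Fin (2 * h)) (i : Fin (a k)), x ⟨k, i⟩ = y k := by
    intro k i
    rw [hy_def]
    field_simp
    rw [mul_comm]
    exact heq k i
  have hμy : ∀ k, μ * y k = T k := by
    intro k
    rw [hy_def]
    field_simp
  have hsum : ∀ k : Fin (2 * h), (∑ j, x ⟨k, j⟩) = (a k : ℝ) * y k := by
    intro k
    rw [Finset.sum_congr rfl fun j _ => hconst k j, Finset.sum_const, Finset.card_univ,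
      Fintype.card_fin, nsmul_eq_mul]
  have hT : ∀ k : Fin (2 * h), T k = ∑ l, if cellAdj k l then (a l : ℝ) * y l else 0 := by
    intro k
    refine Finset.sum_congr rfl fun l _ => ?_
    by_cases hadj : cellAdj k l
    · rw [if_pos hadj, if_pos hadj, hsum]
    · rw [if_neg hadj, if_neg hadj]
  have hy0 : ∀ hp : (0 : ℕ) < 2 * h, y ⟨0, hp⟩ = 0 := by
    intro hp
    rw [← hconst ⟨0, hp⟩ ⟨0, ha _⟩]
    exact h0
  have key : ∀ m : ℕ, ∀ hm : m < 2 * h, y ⟨m, hm⟩ = 0 := by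
    intro m
    induction m using Nat.strong_induction_on with
    | _ m IH =>
      intro hm
      by_cases hm0 : m = 0
      · subst hm0; exact hy0 hm
      by_cases hm1 : m = 1
      · subst hm1
        have h0N : (0 : ℕ) < 2 * h := by omega
        have hc1 : ∀ l : Fin (2 * h), cellAdj ⟨1, hm⟩ l ↔ l = ⟨0, h0N⟩ := by
          intro l
          rw [cellAdj_iff, Fin.ext_iff]
          simp only [Fin.val_mk, true_and, and_true, false_and, and_false, true_or, or_true, false_or, or_false]
          omega
        have hstep : T ⟨1, hm⟩ = (a ⟨0, h0N⟩ : ℝ) * y ⟨0, h0N⟩ := by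
          rw [hT]
          exact sum_cellAdj_single ⟨1, hm⟩ ⟨0, h0N⟩ (fun l => (a l : ℝ) * y l) hc1
        have := hμy ⟨1, hm⟩
        rw [hstep, hy0 (by omega), mul_zero] at this
        exact (mul_eq_zero.mp this).resolve_left hμ
      · have h2m : 2 ≤ m := by omega
        have hm2 : m - 2 < 2 * h := by omega
        have hm1' : m - 1 < 2 * h := by omega
        have IH1 : y ⟨m - 1, hm1'⟩ = 0 := IH (m - 1) (by omega) hm1'
        have IH2 : y ⟨m - 2, hm2⟩ = 0 := IH (m - 2) (by omega) hm2
        rcases Nat.even_or_odd m with hpar | hpar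
        · have hpar' : m % 2 = 0 := Nat.even_iff.mp hpar
          have hc1 : ∀ l : Fin (2 * h), cellAdj ⟨m - 2, hm2⟩ l ↔
              (cellAdj ⟨m, hm⟩ l ∨ l = ⟨m - 1, hm1'⟩) := by
            intro l
            rw [cellAdj_iff, cellAdj_iff, Fin.ext_iff]
            simp only [Fin.val_mk, true_and, and_true, false_and, and_false, true_or, or_true, false_or, or_false]
            omega
          have hc2 : ¬ cellAdj (⟨m, hm⟩ : Fin (2 * h)) ⟨m - 1, hm1'⟩ := by
            rw [cellAdj_iff]
            simp only [Fin.val_mk, true_and, and_true, false_and, and_false, true_or, or_true, false_or, or_false]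
            omega
          have hstep : T ⟨m - 2, hm2⟩
              = T ⟨m, hm⟩ + (a ⟨m - 1, hm1'⟩ : ℝ) * y ⟨m - 1, hm1'⟩ := by
            rw [hT ⟨m - 2, hm2⟩, hT ⟨m, hm⟩]
            exact sum_cellAdj_step ⟨m - 2, hm2⟩ ⟨m, hm⟩ ⟨m - 1, hm1'⟩
              (fun l => (a l : ℝ) * y l) hc1 hc2
          rw [IH1, mul_zero, add_zero, ← hμy, ← hμy, IH2, mul_zero] at hstep
          exact ((mul_eq_zero.mp hstep.symm).resolve_left hμ)
        · have hpar' : m % 2 = 1 := Nat.odd_iff.mp hpar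
          have hc1 : ∀ l : Fin (2 * h), cellAdj ⟨m, hm⟩ l ↔
              (cellAdj ⟨m - 2, hm2⟩ l ∨ l = ⟨m - 1, hm1'⟩) := by
            intro l
            rw [cellAdj_iff, cellAdj_iff, Fin.ext_iff]
            simp only [Fin.val_mk, true_and, and_true, false_and, and_false, true_or, or_true, false_or, or_false]
            omega
          have hc2 : ¬ cellAdj (⟨m - 2, hm2⟩ : Fin (2 * h)) ⟨m - 1, hm1'⟩ := by
            rw [cellAdj_iff]
            simp only [Fin.val_mk, true_and, and_true, false_and, and_false, true_or, or_true, false_or, or_false]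
            omega
          have hstep : T ⟨m, hm⟩
              = T ⟨m - 2, hm2⟩ + (a ⟨m - 1, hm1'⟩ : ℝ) * y ⟨m - 1, hm1'⟩ := by
            rw [hT ⟨m - 2, hm2⟩, hT ⟨m, hm⟩]
            exact sum_cellAdj_step ⟨m, hm⟩ ⟨m - 2, hm2⟩ ⟨m - 1, hm1'⟩
              (fun l => (a l : ℝ) * y l) hc1 hc2
          rw [IH1, mul_zero, add_zero, ← hμy, ← hμy, IH2, mul_zero] at hstep
          exact ((mul_eq_zero.mp hstep).resolve_left hμ)
  funext u
  obtain ⟨k, i⟩ := u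
  rw [hconst k i, Pi.zero_apply]
  have := key k.val k.isLt
  simpa using this

lemma kernel_sums (h : ℕ) (hh : 1 ≤ h) (a : Fin (2 * h) → ℕ) (ha : ∀ k, 1 ≤ a k)
    (x : (Σ k : Fin (2 * h), Fin (a k)) → ℝ) (hx : chainA h a *ᵥ x = 0) :
    ∀ k : Fin (2 * h), (∑ j, x ⟨k, j⟩) = 0 := by
  have hT : ∀ k : Fin (2 * h), (∑ l, if cellAdj k l then (∑ j, x ⟨l, j⟩) else 0) = 0 := by
    intro k
    have h1 := congrFun hx ⟨k, ⟨0, ha k⟩⟩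
    rw [mulVec_chainA] at h1
    exact h1
  intro k
  obtain ⟨kv, hk⟩ := k
  by_cases hk0 : kv = 0
  · subst hk0
    have h1N : 1 < 2 * h := by omega
    have hc1 : ∀ l : Fin (2 * h), cellAdj ⟨1, h1N⟩ l ↔ l = ⟨0, hk⟩ := by
      intro l
      rw [cellAdj_iff, Fin.ext_iff]
      simp only [Fin.val_mk, true_and, and_true, false_and, and_false, true_or, or_true,
        false_or, or_false]
      omega
    exact (sum_cellAdj_single ⟨1, h1N⟩ ⟨0, hk⟩ (fun l => ∑ j, x ⟨l, j⟩) hc1).symm.trans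
      (hT ⟨1, h1N⟩)
  by_cases hklast : kv = 2 * h - 1
  · have h2N : 2 * h - 2 < 2 * h := by omega
    have hc1 : ∀ l : Fin (2 * h), cellAdj ⟨2 * h - 2, h2N⟩ l ↔ l = ⟨kv, hk⟩ := by
      intro l
      rw [cellAdj_iff, Fin.ext_iff]
      simp only [Fin.val_mk, true_and, and_true, false_and, and_false, true_or, or_true,
        false_or, or_false]
      omega
    exact (sum_cellAdj_single ⟨2 * h - 2, h2N⟩ ⟨kv, hk⟩ (fun l => ∑ j, x ⟨l, j⟩) hc1).symm.trans
      (hT ⟨2 * h - 2, h2N⟩)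
  · have hk1 : 1 ≤ kv := by omega
    have hk2 : kv ≤ 2 * h - 2 := by omega
    have hm1 : kv - 1 < 2 * h := by omega
    have hp1 : kv + 1 < 2 * h := by omega
    rcases Nat.even_or_odd kv with hpar | hpar
    · have hpar' : kv % 2 = 0 := Nat.even_iff.mp hpar
      have hc1 : ∀ l : Fin (2 * h), cellAdj ⟨kv + 1, hp1⟩ l ↔
          (cellAdj ⟨kv - 1, hm1⟩ l ∨ l = ⟨kv, hk⟩) := by
        intro l
        rw [cellAdj_iff, cellAdj_iff, Fin.ext_iff]
        simp only [Fin.val_mk, true_and, and_true, false_and, and_false, true_or, or_true,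
          false_or, or_false]
        omega
      have hc2 : ¬ cellAdj (⟨kv - 1, hm1⟩ : Fin (2 * h)) ⟨kv, hk⟩ := by
        rw [cellAdj_iff]
        simp only [Fin.val_mk, true_and, and_true, false_and, and_false, true_or, or_true,
          false_or, or_false]
        omega
      have hstep := sum_cellAdj_step ⟨kv + 1, hp1⟩ ⟨kv - 1, hm1⟩ ⟨kv, hk⟩
        (fun l => ∑ j, x ⟨l, j⟩) hc1 hc2
      rw [hT ⟨kv + 1, hp1⟩, hT ⟨kv - 1, hm1⟩] at hstep
      simpa using hstep.symm
    · have hpar' : kv % 2 = 1 := Nat.odd_iff.mp hpar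
      have hc1 : ∀ l : Fin (2 * h), cellAdj ⟨kv - 1, hm1⟩ l ↔
          (cellAdj ⟨kv + 1, hp1⟩ l ∨ l = ⟨kv, hk⟩) := by
        intro l
        rw [cellAdj_iff, cellAdj_iff, Fin.ext_iff]
        simp only [Fin.val_mk, true_and, and_true, false_and, and_false, true_or, or_true,
          false_or, or_false]
        omega
      have hc2 : ¬ cellAdj (⟨kv + 1, hp1⟩ : Fin (2 * h)) ⟨kv, hk⟩ := by
        rw [cellAdj_iff]
        simp only [Fin.val_mk, true_and, and_true, false_and, and_false, true_or, or_true,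
          false_or, or_false]
        omega
      have hstep := sum_cellAdj_step ⟨kv - 1, hm1⟩ ⟨kv + 1, hp1⟩ ⟨kv, hk⟩
        (fun l => ∑ j, x ⟨l, j⟩) hc1 hc2
      rw [hT ⟨kv + 1, hp1⟩, hT ⟨kv - 1, hm1⟩] at hstep
      simpa using hstep.symm

lemma kernel_of_sums (h : ℕ) (a : Fin (2 * h) → ℕ)
    (x : (Σ k : Fin (2 * h), Fin (a k)) → ℝ)
    (hs : ∀ k : Fin (2 * h), (∑ j, x ⟨k, j⟩) = 0) :
    chainA h a *ᵥ x = 0 := by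
  funext u
  obtain ⟨k, i⟩ := u
  rw [mulVec_chainA, Pi.zero_apply]
  refine Finset.sum_eq_zero fun l _ => ?_
  rw [hs l]
  exact ite_self 0

noncomputable def cellSum (h : ℕ) (a : Fin (2 * h) → ℕ) :
    ((Σ k : Fin (2 * h), Fin (a k)) → ℝ) →ₗ[ℝ] (Fin (2 * h) → ℝ) where
  toFun x := fun k => ∑ j, x ⟨k, j⟩
  map_add' x y := by funext k; simp [Finset.sum_add_distrib]
  map_smul' c x := by funext k; simp [Finset.mul_sum]

lemma rank_chainA_le (h : ℕ) (hh : 1 ≤ h) (a : Fin (2 * h) → ℕ) :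
    (chainA h a).rank ≤ 2 * h := by
  have h1 := LinearMap.finrank_range_add_finrank_ker (cellSum h a)
  have h2 := LinearMap.finrank_range_add_finrank_ker (chainA h a).mulVecLin
  have h3 : Module.finrank ℝ (LinearMap.range (cellSum h a)) ≤ 2 * h := by
    calc Module.finrank ℝ (LinearMap.range (cellSum h a))
        ≤ Module.finrank ℝ (Fin (2 * h) → ℝ) := Submodule.finrank_le _
      _ = 2 * h := by rw [Module.finrank_fintype_fun_eq_card, Fintype.card_fin]
  have h4 : LinearMap.ker (cellSum h a) ≤ LinearMap.ker (chainA h a).mulVecLin := by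
    intro x hx
    rw [LinearMap.mem_ker] at hx ⊢
    rw [mulVecLin_apply]
    exact kernel_of_sums h a x (fun k => congrFun hx k)
  have h5 : Module.finrank ℝ (LinearMap.ker (cellSum h a))
      ≤ Module.finrank ℝ (LinearMap.ker (chainA h a).mulVecLin) := Submodule.finrank_mono h4
  have h6 : (chainA h a).rank = Module.finrank ℝ (LinearMap.range (chainA h a).mulVecLin) := rfl
  omega

lemma chainA_isHermitian (h : ℕ) (a : Fin (2 * h) → ℕ) : (chainA h a).IsHermitian := by
  rw [Matrix.IsHermitian, conjTranspose_eq_transpose_of_trivial]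
  exact SimpleGraph.isSymm_adjMatrix _

lemma sum_singleton_cell (h : ℕ) (a : Fin (2 * h) → ℕ)
    (x : (Σ k : Fin (2 * h), Fin (a k)) → ℝ) (k : Fin (2 * h)) (hk : a k = 1)
    (j : Fin (a k)) : (∑ j', x ⟨k, j'⟩) = x ⟨k, j⟩ := by
  have hj : ∀ j' : Fin (a k), j' = j := by
    intro j'
    have h1 := j'.isLt
    have h2 := j.isLt
    exact Fin.ext (by omega)
  calc (∑ j', x ⟨k, j'⟩) = ∑ _j' : Fin (a k), x ⟨k, j⟩ :=
        Finset.sum_congr rfl fun j' _ => by rw [hj j']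
    _ = x ⟨k, j⟩ := by
        rw [Finset.sum_const, Finset.card_univ, Fintype.card_fin, hk, one_smul]

lemma zero_unique_allone (h : ℕ) (hh : 1 ≤ h) (a : Fin (2 * h) → ℕ) (ha : ∀ k, 1 ≤ a k)
    (hall : ∀ k, a k = 1) (x : (Σ k : Fin (2 * h), Fin (a k)) → ℝ)
    (hx : chainA h a *ᵥ x = (0 : ℝ) • x) : x = 0 := by
  rw [zero_smul] at hx
  have hs := kernel_sums h hh a ha x hx
  funext u
  obtain ⟨k, i⟩ := u
  rw [Pi.zero_apply, ← sum_singleton_cell h a x k (hall k) i, hs k]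

lemma zero_unique_two (h : ℕ) (hh : 1 ≤ h) (a : Fin (2 * h) → ℕ) (ha : ∀ k, 1 ≤ a k)
    (i₀ : Fin (2 * h)) (hi₀ : a i₀ = 2) (hone : ∀ j, j ≠ i₀ → a j = 1)
    (x : (Σ k : Fin (2 * h), Fin (a k)) → ℝ)
    (hx : chainA h a *ᵥ x = (0 : ℝ) • x)
    (h0 : x ⟨i₀, ⟨0, ha i₀⟩⟩ = 0) : x = 0 := by
  rw [zero_smul] at hx
  have hs := kernel_sums h hh a ha x hx
  funext u
  obtain ⟨k, i⟩ := u
  rw [Pi.zero_apply]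
  by_cases hk : k = i₀
  · subst hk
    have h1lt : 1 < a k := by omega
    have hx0 : x ⟨k, ⟨0, ha k⟩⟩ = 0 := h0
    have huniv : (Finset.univ : Finset (Fin (a k))) = {⟨0, ha k⟩, ⟨1, h1lt⟩} := by
      ext j'
      simp only [Finset.mem_univ, Finset.mem_insert, Finset.mem_singleton, true_iff,
        Fin.ext_iff, Fin.val_mk]
      have := j'.isLt
      omega
    have hsum2 : (∑ j', x ⟨k, j'⟩) = x ⟨k, ⟨0, ha k⟩⟩ + x ⟨k, ⟨1, h1lt⟩⟩ := by
      rw [huniv, Finset.sum_insert (by simp [Fin.ext_iff]), Finset.sum_singleton]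
    have hx1 : x ⟨k, ⟨1, h1lt⟩⟩ = 0 := by
      have := hs k
      rw [hsum2, hx0, zero_add] at this
      exact this
    have h2 := i.isLt
    by_cases hi : (i : ℕ) = 0
    · rw [show i = ⟨0, ha k⟩ from Fin.ext hi]
      exact hx0
    · rw [show i = ⟨1, h1lt⟩ from Fin.ext (show (i : ℕ) = 1 by omega)]
      exact hx1
  · rw [← sum_singleton_cell h a x k (hone k hk) i, hs k]

theorem chain_distinct_adjacency_eigenvalues
    (h : ℕ) (hh : 1 ≤ h) (a : Fin (2 * h) → ℕ) (ha : ∀ k, 1 ≤ a k) :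
    (Multiset.card (chainA h a).charpoly.roots = ∑ k, a k ∧
        (chainA h a).charpoly.roots.Nodup) ↔
      ((∀ k, a k = 1) ∨ ∃ i, a i = 2 ∧ ∀ j, j ≠ i → a j = 1) := by
  classical
  have hA : (chainA h a).IsHermitian := chainA_isHermitian h a
  have hroots : (chainA h a).charpoly.roots = Finset.univ.val.map hA.eigenvalues :=
    my_roots_charpoly hA
  have hn : Fintype.card (Σ k : Fin (2 * h), Fin (a k)) = ∑ k, a k := by
    rw [Fintype.card_sigma]
    exact Finset.sum_congr rfl fun k _ => Fintype.card_fin _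
  have hcard : Multiset.card (chainA h a).charpoly.roots = ∑ k, a k := by
    rw [hroots, Multiset.card_map, ← hn]
    rfl
  have hcnt : ∀ μ : ℝ, Multiset.count μ (Finset.univ.val.map hA.eigenvalues)
      = (Finset.filter (fun i => μ = hA.eigenvalues i) Finset.univ).card := by
    intro μ
    rw [Multiset.count_map]
    rfl
  constructor
  · rintro ⟨-, hnodup⟩
    rw [hroots, Multiset.nodup_iff_count_le_one] at hnodup
    have hcount := hnodup 0
    rw [hcnt 0] at hcount
    have hrank := rank_chainA_le h hh a
    have hr2 := hA.rank_eq_card_non_zero_eigs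
    rw [Fintype.card_subtype] at hr2
    have hsplit := Finset.card_filter_add_card_filter_not
      (s := (Finset.univ : Finset (Σ k : Fin (2 * h), Fin (a k))))
      (p := fun i => (0 : ℝ) = hA.eigenvalues i)
    have hfe : Finset.filter (fun i => ¬ (0 : ℝ) = hA.eigenvalues i) Finset.univ
        = Finset.filter (fun i => hA.eigenvalues i ≠ 0) Finset.univ := by
      apply Finset.filter_congr
      intro i _
      simp [eq_comm]
    rw [hfe, Finset.card_univ, hn] at hsplit
    have hsum_le : ∑ k, a k ≤ 2 * h + 1 := by omega
    have hbig : ∀ i : Fin (2 * h), a i + (2 * h - 1) ≤ ∑ k, a k := by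
      intro i
      rw [← Finset.add_sum_erase _ a (Finset.mem_univ i)]
      have h1 : (Finset.univ.erase i).card ≤ ∑ k ∈ Finset.univ.erase i, a k := by
        rw [Finset.card_eq_sum_ones]
        exact Finset.sum_le_sum fun j _ => ha j
      have h2 : (Finset.univ.erase i).card = 2 * h - 1 := by
        rw [Finset.card_erase_of_mem (Finset.mem_univ i), Finset.card_univ, Fintype.card_fin]
      omega
    have hbig2 : ∀ i j : Fin (2 * h), i ≠ j → a i + a j + (2 * h - 2) ≤ ∑ k, a k := by
      intro i j hij
      rw [← Finset.add_sum_erase _ a (Finset.mem_univ i),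
        ← Finset.add_sum_erase _ a (Finset.mem_erase.mpr ⟨hij.symm, Finset.mem_univ j⟩)]
      have h1 : ((Finset.univ.erase i).erase j).card
          ≤ ∑ k ∈ (Finset.univ.erase i).erase j, a k := by
        rw [Finset.card_eq_sum_ones]
        exact Finset.sum_le_sum fun j' _ => ha j'
      have h2 : ((Finset.univ.erase i).erase j).card = 2 * h - 2 := by
        rw [Finset.card_erase_of_mem (Finset.mem_erase.mpr ⟨hij.symm, Finset.mem_univ j⟩),
          Finset.card_erase_of_mem (Finset.mem_univ i), Finset.card_univ, Fintype.card_fin]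
        omega
      omega
    by_cases hall : ∀ k, a k = 1
    · exact Or.inl hall
    · push_neg at hall
      obtain ⟨i₀, hi₀⟩ := hall
      refine Or.inr ⟨i₀, ?_, ?_⟩
      · have h1 := hbig i₀
        have h2 := ha i₀
        omega
      · intro j hj
        have h1 := hbig2 i₀ j (Ne.symm hj)
        have h2 := ha j
        have h3 := ha i₀
        omega
  · intro hrhs
    refine ⟨hcard, ?_⟩
    rw [hroots, Multiset.nodup_iff_count_le_one]
    intro μ
    rw [hcnt μ, Finset.card_le_one]
    intro i hi j hj
    rw [Finset.mem_filter] at hi hj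
    by_cases hμ : μ = 0
    · subst hμ
      rcases hrhs with hall | ⟨i₀, hi₀, hone⟩
      · exact my_eig_eq hA 0 0 (fun x hx _ => zero_unique_allone h hh a ha hall x hx)
          hi.2.symm hj.2.symm
      · refine my_eig_eq hA 0
          (LinearMap.proj (⟨i₀, ⟨0, ha i₀⟩⟩ : Σ k : Fin (2 * h), Fin (a k)))
          ?_ hi.2.symm hj.2.symm
        intro x hx h0
        exact zero_unique_two h hh a ha i₀ hi₀ hone x hx h0
    · refine my_eig_eq hA μ
        (LinearMap.proj (⟨⟨0, by omega⟩, ⟨0, ha _⟩⟩ : Σ k : Fin (2 * h), Fin (a k)))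
        ?_ hi.2.symm hj.2.symm
      intro x hx h0
      exact eigvec_unique h hh a ha μ hμ x hx h0
end

section
/- Let a_1, a_2, a_3, a_4 be positive integers with a_1·a_4 = a_2·a_3. Let G be the chain graph with binary string 0^{a_1}1^{a_2}0^{a_3}1^{a_4} and let H be the chain graph with binary string 0^{a_2}1^{a_1}0^{a_4}1^{a_3}. Then G and H are cospectral: the adjacency matrices A(G) and A(H) have the same characteristic polynomial. -/
open Matrix Polynomial

section Aux
open Matrix Polynomial

set_option linter.unusedSectionVars false


variable {R : Type*} [CommRing R] [IsDomain R]
variable {n m : Type*} [Fintype n] [Fintype m] [DecidableEq n] [DecidableEq m]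

lemma my_charpoly_zero : (0 : Matrix n n R).charpoly = X ^ Fintype.card n := by
  have hd : charmatrix (0 : Matrix n n R) = diagonal fun _ => (X : R[X]) := by
    ext i j
    by_cases h : i = j
    · subst h; simp
    · simp [charmatrix_apply_ne _ _ _ h, diagonal_apply_ne _ h]
  rw [Matrix.charpoly, hd, det_diagonal, Finset.prod_const, Finset.card_univ]

lemma my_charpoly_similar (P M₁ M₂ : Matrix n n R) (hP : P.det = 1)
    (h : P * M₁ = M₂ * P) : M₁.charpoly = M₂.charpoly := by
  have key : P.map C * charmatrix M₁ = charmatrix M₂ * P.map C := by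
    have h' : P.map C * M₁.map (C : R →+* R[X]) = M₂.map C * P.map C := by
      rw [← Matrix.map_mul, ← Matrix.map_mul, h]
    have hs : P.map (C : R →+* R[X]) * Matrix.scalar n (X : R[X])
        = Matrix.scalar n (X : R[X]) * P.map C :=
      (Matrix.scalar_commute (X : R[X]) (fun r' => Commute.all _ r') (P.map C)).symm
    simp only [charmatrix, RingHom.mapMatrix_apply, Matrix.mul_sub, Matrix.sub_mul, hs, h']
  have hdet : (P.map (C : R →+* R[X])).det = 1 := by
    rw [← RingHom.mapMatrix_apply, ← RingHom.map_det, hP, Polynomial.C_1]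
  have := congrArg Matrix.det key
  rw [det_mul, det_mul, hdet, one_mul, mul_one] at this
  exact this

lemma my_charpoly_rect (A : Matrix n m R) (B : Matrix m n R) :
    (A * B).charpoly * X ^ Fintype.card m = (B * A).charpoly * X ^ Fintype.card n := by
  have hsim : (fromBlocks 1 0 B 1 : Matrix (n ⊕ m) (n ⊕ m) R) * fromBlocks (A * B) A 0 0 =
      fromBlocks 0 A 0 (B * A) * fromBlocks 1 0 B 1 := by
    simp [fromBlocks_multiply, Matrix.mul_assoc]
  have hdet : (fromBlocks 1 0 B 1 : Matrix (n ⊕ m) (n ⊕ m) R).det = 1 := by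
    rw [det_fromBlocks_zero₁₂]; simp
  have h := my_charpoly_similar _ _ _ hdet hsim
  rwa [charpoly_fromBlocks_zero₂₁, charpoly_fromBlocks_zero₂₁, my_charpoly_zero,
    my_charpoly_zero, mul_comm (X ^ Fintype.card n)] at h


variable {h : ℕ} (a : Fin (2 * h) → ℕ)

/-- left factor -/
noncomputable def leftF : Matrix (Σ k : Fin (2 * h), Fin (a k)) (Fin (2 * h)) ℝ :=
  Matrix.of fun u l => if u.1 = l then (1 : ℝ) else 0

/-- right factor -/
noncomputable def rightF : Matrix (Fin (2 * h)) (Σ k : Fin (2 * h), Fin (a k)) ℝ :=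
  Matrix.of fun l u => if cellAdj l u.1 then (1 : ℝ) else 0

lemma chainA_factor : chainA h a = leftF a * rightF a := by
  ext u v
  rw [Matrix.mul_apply]
  simp only [leftF, rightF, Matrix.of_apply, ite_mul, one_mul, zero_mul]
  rw [Finset.sum_ite_eq (Finset.univ) u.1 (fun l => if cellAdj l v.1 then (1:ℝ) else 0)]
  simp only [Finset.mem_univ, if_true]
  by_cases hc : cellAdj u.1 v.1
  · rw [chainA, SimpleGraph.adjMatrix_apply, if_pos (show (chainGraph h a).Adj u v from hc),
      if_pos hc]
  · rw [chainA, SimpleGraph.adjMatrix_apply, if_neg (show ¬(chainGraph h a).Adj u v from hc),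
      if_neg hc]

lemma quotA_factor : rightF a * leftF a = quotA h a := by
  ext k l
  rw [Matrix.mul_apply, ← Finset.univ_sigma_univ, Finset.sum_sigma]
  simp only [leftF, rightF, Matrix.of_apply]
  have : ∀ k' : Fin (2 * h),
      (∑ i : Fin (a k'), (if cellAdj k (⟨k', i⟩ : Σ k, Fin (a k)).1 then (1:ℝ) else 0) *
        (if (⟨k', i⟩ : Σ k, Fin (a k)).1 = l then (1:ℝ) else 0)) =
      if k' = l then (if cellAdj k k' then (a k' : ℝ) else 0) else 0 := by
    intro k'
    by_cases hl : k' = l <;> by_cases hc : cellAdj k k' <;>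
      simp [hl, hc, Finset.sum_const, nsmul_eq_mul]
  rw [Finset.sum_congr rfl fun k' _ => this k']
  rw [Finset.sum_ite_eq' Finset.univ l (fun k' => if cellAdj k k' then (a k' : ℝ) else 0)]
  simp [quotA]

lemma charpoly_chainA_eq :
    (chainA h a).charpoly * X ^ Fintype.card (Fin (2 * h)) =
    (quotA h a).charpoly * X ^ Fintype.card (Σ k : Fin (2 * h), Fin (a k)) := by
  rw [chainA_factor a, ← quotA_factor a]
  exact my_charpoly_rect (leftF a) (rightF a)

lemma quotA_explicit (w x y z : ℕ) :
    quotA 2 ![w, x, y, z] =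
      !![0, (x:ℝ), 0, z; w, 0, 0, 0; 0, 0, 0, z; w, 0, y, 0] := by
  ext i j
  fin_cases i <;> fin_cases j <;> simp only [quotA, Matrix.of_apply] <;>
    first
      | (rw [if_pos (by decide)]; rfl)
      | (rw [if_neg (by decide)]; rfl)


theorem my_det_fin_four {R : Type*} [CommRing R] (A : Matrix (Fin 4) (Fin 4) R) :
    det A =
      A 0 0*A 1 1*A 2 2*A 3 3 - A 0 0*A 1 1*A 2 3*A 3 2 - A 0 0*A 1 2*A 2 1*A 3 3
      + A 0 0*A 1 2*A 2 3*A 3 1 + A 0 0*A 1 3*A 2 1*A 3 2 - A 0 0*A 1 3*A 2 2*A 3 1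
      - A 0 1*A 1 0*A 2 2*A 3 3 + A 0 1*A 1 0*A 2 3*A 3 2 + A 0 1*A 1 2*A 2 0*A 3 3
      - A 0 1*A 1 2*A 2 3*A 3 0 - A 0 1*A 1 3*A 2 0*A 3 2 + A 0 1*A 1 3*A 2 2*A 3 0
      + A 0 2*A 1 0*A 2 1*A 3 3 - A 0 2*A 1 0*A 2 3*A 3 1 - A 0 2*A 1 1*A 2 0*A 3 3
      + A 0 2*A 1 1*A 2 3*A 3 0 + A 0 2*A 1 3*A 2 0*A 3 1 - A 0 2*A 1 3*A 2 1*A 3 0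
      - A 0 3*A 1 0*A 2 1*A 3 2 + A 0 3*A 1 0*A 2 2*A 3 1 + A 0 3*A 1 1*A 2 0*A 3 2
      - A 0 3*A 1 1*A 2 2*A 3 0 - A 0 3*A 1 2*A 2 0*A 3 1 + A 0 3*A 1 2*A 2 1*A 3 0 := by
  rw [Matrix.det_succ_row_zero]
  simp only [Fin.sum_univ_four, Matrix.det_fin_three, Matrix.submatrix_apply]
  norm_num [Fin.succAbove, Fin.lt_def,
    show (Fin.succ 0 : Fin 4) = 1 from rfl, show (Fin.succ 1 : Fin 4) = 2 from rfl,
    show (Fin.succ 2 : Fin 4) = 3 from rfl,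
    show (Fin.castSucc 0 : Fin 4) = 0 from rfl, show (Fin.castSucc 1 : Fin 4) = 1 from rfl,
    show (Fin.castSucc 2 : Fin 4) = 2 from rfl,
    show ((0:Fin 4):ℕ) = 0 from rfl, show ((1:Fin 4):ℕ) = 1 from rfl,
    show ((2:Fin 4):ℕ) = 2 from rfl, show ((3:Fin 4):ℕ) = 3 from rfl]
  ring

set_option maxHeartbeats 1000000 in
lemma charpoly_fourMat (w x y z : ℝ) :
    (!![0, x, 0, z; w, 0, 0, 0; 0, 0, 0, z; w, 0, y, 0] :
      Matrix (Fin 4) (Fin 4) ℝ).charpoly =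
    X ^ 4 - C y * C z * X ^ 2 - C w * C x * X ^ 2 - C w * C z * X ^ 2
      + C w * C x * C y * C z := by
  rw [Matrix.charpoly, my_det_fin_four]
  simp [charmatrix_apply, Matrix.diagonal_apply]
  ring

end Aux

theorem chain_h_two_cospectral
    (a1 a2 a3 a4 : ℕ) (h1 : 0 < a1) (h2 : 0 < a2) (h3 : 0 < a3) (h4 : 0 < a4)
    (heq : a1 * a4 = a2 * a3) :
    (chainA 2 ![a1, a2, a3, a4]).charpoly = (chainA 2 ![a2, a1, a4, a3]).charpoly := by
  have key1 := charpoly_chainA_eq (h := 2) ![a1, a2, a3, a4]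
  have key2 := charpoly_chainA_eq (h := 2) ![a2, a1, a4, a3]
  have hcard : Fintype.card (Σ k : Fin (2 * 2), Fin ((![a1, a2, a3, a4]) k)) =
      Fintype.card (Σ k : Fin (2 * 2), Fin ((![a2, a1, a4, a3]) k)) := by
    simp [Fintype.card_sigma, Fin.sum_univ_four]
    omega
  have hR : (a1 : ℝ) * a4 = (a2 : ℝ) * a3 := by exact_mod_cast heq
  have hq : (quotA 2 ![a1, a2, a3, a4]).charpoly = (quotA 2 ![a2, a1, a4, a3]).charpoly := by
    rw [quotA_explicit, quotA_explicit, charpoly_fourMat, charpoly_fourMat]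
    have hC : C ((a1:ℝ)) * C ((a4:ℝ)) = C ((a2:ℝ)) * C ((a3:ℝ)) := by
      rw [← Polynomial.C_mul, ← Polynomial.C_mul, hR]
    linear_combination (-(X : ℝ[X]) ^ 2) * hC
  have := key1.trans (by rw [hq, hcard] : (quotA 2 ![a1, a2, a3, a4]).charpoly *
      X ^ Fintype.card (Σ k : Fin (2 * 2), Fin ((![a1, a2, a3, a4]) k)) =
      (quotA 2 ![a2, a1, a4, a3]).charpoly *
      X ^ Fintype.card (Σ k : Fin (2 * 2), Fin ((![a2, a1, a4, a3]) k)))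
  rw [← key2] at this
  exact mul_right_cancel₀ (pow_ne_zero _ Polynomial.X_ne_zero) this
end
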